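/- arXiv:2302.05874 — 5 statements merged into one kernel-verified Lean document; each statement's English description precedes it below -/
import Mathlib

section
/- If M is a Metzler matrix (a real d×d matrix with nonnegative off-diagonal entries) that is irreducible in the sense that for all indices i, j there is a chain i = i₁, i₂, …, iₙ = j with M_{i_l, i_{l+1}} > 0, then every entry of the matrix exponential exp(M) is strictly positive. -/
/-- A Metzler matrix: off-diagonal entries are nonnegative. -/
def Matrix.IsMetzler {d : ℕ} (M : Matrix (Fin d) (Fin d) ℝ) : Prop :=
  ∀ i j, i ≠ j → 0 ≤ M i j

/-- Irreducibility via chains of strictly positive entries. -/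
def Matrix.IsIrreducibleChain {d : ℕ} (M : Matrix (Fin d) (Fin d) ℝ) : Prop :=
  ∀ i j : Fin d, ∃ (n : ℕ) (c : ℕ → Fin d), c 0 = i ∧ c n = j ∧
    ∀ l, l < n → 0 < M (c l) (c (l + 1))

/-- Entrywise nonnegativity is preserved by powers. -/
lemma pow_entry_nonneg {d : ℕ} {A : Matrix (Fin d) (Fin d) ℝ}
    (hA : ∀ i j, 0 ≤ A i j) (n : ℕ) : ∀ i j, 0 ≤ (A ^ n) i j := by
  induction n with
  | zero => intro i j; simp [Matrix.one_apply]; positivity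
  | succ n ih =>
    intro i j
    rw [pow_succ, Matrix.mul_apply]
    exact Finset.sum_nonneg fun k _ => mul_nonneg (ih i k) (hA k j)

/-- Lower bound on powers by a product along a chain. -/
lemma pow_entry_chain {d : ℕ} {A : Matrix (Fin d) (Fin d) ℝ}
    (hA : ∀ i j, 0 ≤ A i j) :
    ∀ (n : ℕ) (c : ℕ → Fin d),
      (∏ l ∈ Finset.range n, A (c l) (c (l + 1))) ≤ (A ^ n) (c 0) (c n) := by
  intro n
  induction n with
  | zero => intro c; simp [Matrix.one_apply]
  | succ n ih =>
    intro c
    have h1 := ih (fun l => c (l + 1))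
    rw [pow_succ', Matrix.mul_apply]
    calc ∏ l ∈ Finset.range (n + 1), A (c l) (c (l + 1))
        = A (c 0) (c 1) * ∏ l ∈ Finset.range n, A (c (l + 1)) (c (l + 1 + 1)) := by
          rw [Finset.prod_range_succ']
          ring
      _ ≤ A (c 0) (c 1) * (A ^ n) (c 1) (c (n + 1)) := by
          exact mul_le_mul_of_nonneg_left h1 (hA _ _)
      _ ≤ ∑ k, A (c 0) k * (A ^ n) k (c (n + 1)) := by
          apply Finset.single_le_sum (f := fun k => A (c 0) k * (A ^ n) k (c (n + 1)))
            (fun k _ => mul_nonneg (hA _ _) (pow_entry_nonneg hA n _ _))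
            (Finset.mem_univ (c 1))

theorem exp_pos_of_irreducible_metzler {d : ℕ} (hd : 1 ≤ d)
    (M : Matrix (Fin d) (Fin d) ℝ) (hMetz : M.IsMetzler) (hirr : M.IsIrreducibleChain) :
    ∀ i j, 0 < NormedSpace.exp M i j := by
  classical
  set c : ℝ := ∑ i, |M i i| with hc
  have hc0 : ∀ i : Fin d, |M i i| ≤ c := fun i =>
    Finset.single_le_sum (f := fun k => |M k k|) (fun k _ => abs_nonneg _) (Finset.mem_univ i)
  set A : Matrix (Fin d) (Fin d) ℝ := M + c • (1 : Matrix (Fin d) (Fin d) ℝ) with hA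
  have hAnn : ∀ i j, 0 ≤ A i j := by
    intro i j
    by_cases h : i = j
    · subst h
      simp only [hA, Matrix.add_apply, Matrix.smul_apply, Matrix.one_apply_eq, smul_eq_mul,
        mul_one]
      linarith [neg_abs_le (M i i), hc0 i]
    · simp only [hA, Matrix.add_apply, Matrix.smul_apply, Matrix.one_apply_ne h, smul_eq_mul,
        mul_zero, add_zero]
      exact hMetz i j h
  have hApos : ∀ i j, 0 < M i j → 0 < A i j := by
    intro i j hM
    by_cases h : i = j
    · subst h
      simp only [hA, Matrix.add_apply, Matrix.smul_apply, Matrix.one_apply_eq, smul_eq_mul,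
        mul_one]
      have := hc0 i
      have : (0:ℝ) ≤ c := le_trans (abs_nonneg _) this
      linarith
    · simpa [hA, Matrix.add_apply, Matrix.smul_apply, Matrix.one_apply_ne h] using hM
  -- decompose exp M
  have hM_eq : M = A + Matrix.diagonal (fun _ : Fin d => -c) := by
    ext i j
    by_cases h : i = j
    · subst h; simp [hA, Matrix.one_apply_eq, Matrix.diagonal_apply_eq]
    · simp [hA, Matrix.one_apply_ne h, Matrix.diagonal_apply_ne _ h]
  have hcomm : Commute A (Matrix.diagonal (fun _ : Fin d => -c)) := by
    have : Matrix.diagonal (fun _ : Fin d => -c) = (-c) • (1 : Matrix (Fin d) (Fin d) ℝ) := by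
      ext i j
      by_cases h : i = j
      · subst h; simp
      · simp [Matrix.one_apply_ne h, Matrix.diagonal_apply_ne _ h]
    rw [this]
    exact (Commute.one_right A).smul_right _
  have hsplit : NormedSpace.exp M
      = NormedSpace.exp A * Matrix.diagonal (fun _ : Fin d => Real.exp (-c)) := by
    rw [hM_eq, Matrix.exp_add_of_commute A _ hcomm, Matrix.exp_diagonal]
    congr 1
    rw [Pi.exp_def]
    funext k
    rw [Real.exp_eq_exp_ℝ]
  -- entrywise positivity of exp A
  have hexpA : ∀ i j, 0 < NormedSpace.exp A i j := by
    letI : SeminormedRing (Matrix (Fin d) (Fin d) ℝ) := Matrix.linftyOpSemiNormedRing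
    letI : NormedRing (Matrix (Fin d) (Fin d) ℝ) := Matrix.linftyOpNormedRing
    letI : NormedAlgebra ℝ (Matrix (Fin d) (Fin d) ℝ) := Matrix.linftyOpNormedAlgebra
    intro i j
    have hsum : Summable (fun n : ℕ => (n.factorial⁻¹ : ℝ) • A ^ n) :=
      NormedSpace.expSeries_summable' (𝕂 := ℝ) A
    have hsum1 : Summable (fun n : ℕ => ((n.factorial⁻¹ : ℝ) • A ^ n) i) :=
      Pi.summable.mp hsum i
    have hsum2 : Summable (fun n : ℕ => ((n.factorial⁻¹ : ℝ) • A ^ n) i j) :=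
      Pi.summable.mp hsum1 j
    have hentry : NormedSpace.exp A i j
        = ∑' n : ℕ, ((n.factorial⁻¹ : ℝ) • A ^ n) i j := by
      rw [NormedSpace.exp_eq_tsum ℝ]
      show (∑' n : ℕ, (n.factorial⁻¹ : ℝ) • A ^ n) i j = _
      erw [tsum_apply hsum, tsum_apply hsum1]
    rw [hentry]
    obtain ⟨n, ch, hch0, hchn, hchpos⟩ := hirr i j
    refine Summable.tsum_pos hsum2 (fun m => ?_) n ?_
    · simp only [Matrix.smul_apply, smul_eq_mul]
      exact mul_nonneg (by positivity) (pow_entry_nonneg hAnn m i j)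
    · simp only [Matrix.smul_apply, smul_eq_mul]
      have hchain : 0 < ∏ l ∈ Finset.range n, A (ch l) (ch (l + 1)) :=
        Finset.prod_pos fun l hl => hApos _ _ (hchpos l (Finset.mem_range.mp hl))
      have := pow_entry_chain hAnn n ch
      rw [hch0, hchn] at this
      have hpow : 0 < (A ^ n) i j := lt_of_lt_of_le hchain this
      positivity
  intro i j
  rw [hsplit, Matrix.mul_diagonal]
  exact mul_pos (hexpA i j) (Real.exp_pos _)
end

section
/- Let ω : [0,∞) → S be right-continuous and A : S → ℝ^{d×d} continuous with each A(s) Metzler, and let y solve y'(t) = A(ω_t) y(t) with y(0) ∈ ℝ^d_+ \ {0}. Then y(t) ∈ ℝ^d_+ \ {0} for all t ≥ 0; moreover if y_i(0) > 0 then y_i(t) > 0 for all t ≥ 0. -/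
open Matrix

open Filter Real Set

private lemma aux_term_bound {a b C : ℝ} (hC : |a| ≤ C) (h : 0 ≤ a ∨ b ≤ 0) :
    -(a * b) ≤ C * ((-b) ⊔ 0) := by
  rcases h with h | h
  · have h1 : -(a * b) = a * (-b) := by ring
    rw [h1]
    calc a * (-b) ≤ a * ((-b) ⊔ 0) := mul_le_mul_of_nonneg_left (le_max_left _ _) h
      _ ≤ C * ((-b) ⊔ 0) :=
          mul_le_mul_of_nonneg_right ((le_abs_self a).trans hC) (le_max_right _ _)
  · have hb : (-b) ⊔ 0 = -b := max_eq_left (by linarith)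
    rw [hb]
    have h1 : -(a * b) = a * (-b) := by ring
    rw [h1]
    exact mul_le_mul_of_nonneg_right (le_of_abs_le hC) (by linarith)

private lemma slope_neg_part {f : ℝ → ℝ} {f' x : ℝ} (hf : HasDerivAt f f' x) :
    ∃ D, Tendsto (fun z => (z - x)⁻¹ * (((-(f z)) ⊔ 0) - ((-(f x)) ⊔ 0)))
        (nhdsWithin x (Set.Ioi x)) (nhds D)
      ∧ (D = 0 ∨ (f x ≤ 0 ∧ D ≤ (-f') ⊔ 0)) := by
  have hslope : Tendsto (fun z => (z - x)⁻¹ * (f z - f x)) (nhdsWithin x (Set.Ioi x))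
      (nhds f') := by
    have := (hasDerivAt_iff_tendsto_slope.mp hf).mono_left
      (nhdsWithin_mono x (fun z hz => ne_of_gt hz : Set.Ioi x ⊆ {x}ᶜ))
    refine this.congr (fun z => ?_)
    simp [slope_def_field, div_eq_inv_mul]
  rcases lt_trichotomy (f x) 0 with hlt | heq | hgt
  · refine ⟨-f', ?_, Or.inr ⟨hlt.le, le_max_left _ _⟩⟩
    have hev : ∀ᶠ z in nhdsWithin x (Set.Ioi x), f z < 0 :=
      eventually_nhdsWithin_of_eventually_nhds
        (hf.continuousAt.eventually_lt continuousAt_const hlt)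
    refine hslope.neg.congr' ?_
    filter_upwards [hev] with z hz
    rw [max_eq_left (by linarith : (0:ℝ) ≤ -(f z)), max_eq_left (by linarith : (0:ℝ) ≤ -(f x))]
    ring
  · refine ⟨(-f') ⊔ 0, ?_, Or.inr ⟨heq.le, le_refl _⟩⟩
    have h2 : Tendsto (fun z => ((-((z - x)⁻¹ * (f z - f x))) ⊔ 0)) (nhdsWithin x (Set.Ioi x))
        (nhds ((-f') ⊔ 0)) := hslope.neg.max tendsto_const_nhds
    refine h2.congr' ?_
    filter_upwards [self_mem_nhdsWithin] with z hz
    have hzx : (0:ℝ) < z - x := sub_pos.mpr hz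
    rw [heq]
    rw [show (-(0:ℝ)) ⊔ 0 = 0 by simp]
    rw [sub_zero, sub_zero]
    rw [mul_max_of_nonneg _ _ (inv_nonneg.mpr hzx.le), mul_zero]
    ring_nf
  · refine ⟨0, ?_, Or.inl rfl⟩
    have hev : ∀ᶠ z in nhdsWithin x (Set.Ioi x), 0 < f z :=
      eventually_nhdsWithin_of_eventually_nhds
        (continuousAt_const.eventually_lt hf.continuousAt hgt)
    refine tendsto_const_nhds.congr' ?_
    filter_upwards [hev] with z hz
    rw [max_eq_right (by linarith : -(f z) ≤ 0), max_eq_right (by linarith : -(f x) ≤ 0)]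
    simp

theorem positive_orthant_invariant
    {d : ℕ} {S : Type*} [MetricSpace S] [CompactSpace S]
    [MeasurableSpace S] [BorelSpace S]
    (A : S → Matrix (Fin d) (Fin d) ℝ)
    (hAcont : ∀ i j, Continuous fun s => A s i j)
    (hMetz : ∀ s, (A s).IsMetzler)
    (ω : ℝ → S)
    (hω : ∀ t, 0 ≤ t → ContinuousWithinAt ω (Set.Ici t) t)
    (hωmeas : Measurable ω)
    (y : ℝ → Fin d → ℝ)
    (hy : ∀ t, 0 ≤ t → HasDerivAt y (A (ω t) *ᵥ y t) t)
    (h0nonneg : ∀ i, 0 ≤ y 0 i) (h0ne : y 0 ≠ 0) :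
    ∀ t, 0 ≤ t →
      (∀ i, 0 ≤ y t i) ∧ y t ≠ 0 ∧ (∀ i, 0 < y 0 i → 0 < y t i) := by
  haveI : Nonempty S := ⟨ω 0⟩
  -- a uniform bound on the entries of A
  have hFcont : Continuous fun s => ∑ i : Fin d, ∑ j : Fin d, |A s i j| := by
    refine continuous_finset_sum _ fun i _ => continuous_finset_sum _ fun j _ => ?_
    exact (hAcont i j).abs
  obtain ⟨s₀, -, hs₀⟩ := isCompact_univ.exists_isMaxOn Set.univ_nonempty
    hFcont.continuousOn
  set C : ℝ := ∑ i : Fin d, ∑ j : Fin d, |A s₀ i j| with hCdef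
  have hC : ∀ s i j, |A s i j| ≤ C := by
    intro s i j
    calc |A s i j| ≤ ∑ j' : Fin d, |A s i j'| :=
          Finset.single_le_sum (f := fun j' => |A s i j'|)
            (fun _ _ => abs_nonneg _) (Finset.mem_univ j)
      _ ≤ ∑ i' : Fin d, ∑ j' : Fin d, |A s i' j'| :=
          Finset.single_le_sum (f := fun i' => ∑ j' : Fin d, |A s i' j'|)
            (fun _ _ => Finset.sum_nonneg fun _ _ => abs_nonneg _) (Finset.mem_univ i)
      _ ≤ C := hs₀ (Set.mem_univ s)
  have hC0 : 0 ≤ C :=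
    Finset.sum_nonneg fun _ _ => Finset.sum_nonneg fun _ _ => abs_nonneg _
  -- notation
  set n : ℝ → ℝ := fun r => (-r) ⊔ 0 with hn
  set g : ℝ → ℝ := fun t => ∑ i : Fin d, n (y t i) with hg
  have hn0 : ∀ r, 0 ≤ n r := fun r => le_max_right _ _
  have hg0 : ∀ t, 0 ≤ g t := fun t => Finset.sum_nonneg fun _ _ => hn0 _
  have hn_of : ∀ r, 0 ≤ r → n r = 0 := fun r hr => max_eq_right (by linarith)
  have hyc : ∀ t, 0 ≤ t → ContinuousAt y t := fun t ht => (hy t ht).continuousAt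
  have hyi : ∀ t, 0 ≤ t → ∀ i, HasDerivAt (fun s => y s i) ((A (ω t) *ᵥ y t) i) t :=
    fun t ht i => hasDerivAt_pi.mp (hy t ht) i
  -- main nonnegativity claim via Grönwall
  have hnonneg : ∀ t, 0 ≤ t → ∀ i, 0 ≤ y t i := by
    intro T hT
    have hcont : ContinuousOn g (Set.Icc 0 T) := by
      intro t ht
      have houter : Continuous fun v : Fin d → ℝ => ∑ i : Fin d, (-(v i)) ⊔ 0 :=
        continuous_finset_sum _ fun i _ => ((continuous_apply i).neg.max continuous_const)
      exact (houter.continuousAt.comp (hyc t ht.1)).continuousWithinAt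
    have ha : g 0 ≤ 0 :=
      le_of_eq (Finset.sum_eq_zero fun i _ => hn_of _ (h0nonneg i))
    have hf' : ∀ x ∈ Set.Ico 0 T, ∀ r, (d : ℝ) * C * g x < r →
        ∃ᶠ z in nhdsWithin x (Set.Ioi x), (z - x)⁻¹ * (g z - g x) < r := by
      intro x hx r hr
      have key : ∀ i : Fin d, ∃ D,
          Tendsto (fun z => (z - x)⁻¹ * (n (y z i) - n (y x i)))
            (nhdsWithin x (Set.Ioi x)) (nhds D) ∧ D ≤ C * g x := by
        intro i
        obtain ⟨D, hD, hcase⟩ := slope_neg_part (hyi x hx.1 i)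
        refine ⟨D, hD, ?_⟩
        rcases hcase with rfl | ⟨hle, hD2⟩
        · exact mul_nonneg hC0 (hg0 x)
        · refine hD2.trans (max_le ?_ (mul_nonneg hC0 (hg0 x)))
          have hmv : (A (ω x) *ᵥ y x) i = ∑ j : Fin d, A (ω x) i j * y x j := by
            simp [Matrix.mulVec, dotProduct]
          rw [hmv]
          calc -(∑ j : Fin d, A (ω x) i j * y x j)
              = ∑ j : Fin d, -(A (ω x) i j * y x j) := by
                rw [← Finset.sum_neg_distrib]
            _ ≤ ∑ j : Fin d, C * n (y x j) := by
                refine Finset.sum_le_sum fun j _ => aux_term_bound (hC _ i j) ?_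
                rcases eq_or_ne j i with rfl | h
                · exact Or.inr hle
                · exact Or.inl (hMetz _ i j (Ne.symm h))
            _ = C * g x := (Finset.mul_sum _ _ _).symm
      choose D hD hDle using key
      have hsum : Tendsto (fun z => ∑ i : Fin d, (z - x)⁻¹ * (n (y z i) - n (y x i)))
          (nhdsWithin x (Set.Ioi x)) (nhds (∑ i : Fin d, D i)) :=
        tendsto_finset_sum _ fun i _ => hD i
      have hlt : (∑ i : Fin d, D i) < r := by
        refine lt_of_le_of_lt (le_trans (Finset.sum_le_sum fun i _ => hDle i) ?_) hr
        rw [Finset.sum_const, Finset.card_univ, Fintype.card_fin, nsmul_eq_mul]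
        rw [mul_assoc]
      have hev : ∀ᶠ z in nhdsWithin x (Set.Ioi x),
          (∑ i : Fin d, (z - x)⁻¹ * (n (y z i) - n (y x i))) < r :=
        hsum.eventually_lt_const hlt
      refine (hev.mono fun z hz => ?_).frequently
      have : (z - x)⁻¹ * (g z - g x)
          = ∑ i : Fin d, (z - x)⁻¹ * (n (y z i) - n (y x i)) := by
        rw [hg]
        rw [← Finset.sum_sub_distrib, ← Finset.mul_sum]
      rw [this]
      exact hz
    have hbound : ∀ x ∈ Set.Ico 0 T, (d : ℝ) * C * g x ≤ (d : ℝ) * C * g x + 0 :=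
      fun x _ => le_of_eq (add_zero _).symm
    have key := le_gronwallBound_of_liminf_deriv_right_le (f := g)
      (f' := fun x => (d : ℝ) * C * g x) (δ := 0) (K := (d : ℝ) * C) (ε := 0)
      hcont hf' ha hbound T ⟨hT, le_refl T⟩
    have hgT : g T ≤ 0 := by
      simpa [gronwallBound_ε0_δ0] using key
    intro i
    have h1 : n (y T i) ≤ 0 :=
      le_trans (Finset.single_le_sum (fun j _ => hn0 (y T j)) (Finset.mem_univ i)) hgT
    have h2 : -(y T i) ≤ n (y T i) := le_max_left _ _
    linarith
  -- positivity claim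
  intro t ht
  have hpos : ∀ i, 0 < y 0 i → 0 < y t i := by
    intro i hi
    set h : ℝ → ℝ := fun s => Real.exp (C * s) * y s i with hh
    have hder : ∀ s, 0 ≤ s → HasDerivAt h
        (Real.exp (C * s) * C * y s i + Real.exp (C * s) * (A (ω s) *ᵥ y s) i) s := by
      intro s hs
      have := (((hasDerivAt_id s).const_mul C).exp).fun_mul (hyi s hs i)
      simpa [hh, mul_one] using this
    have hmono : MonotoneOn h (Set.Icc 0 t) := by
      apply monotoneOn_of_deriv_nonneg (convex_Icc 0 t)
      · exact fun s hs => (hder s hs.1).continuousAt.continuousWithinAt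
      · intro s hs
        rw [interior_Icc] at hs
        exact ((hder s hs.1.le).differentiableAt).differentiableWithinAt
      · intro s hs
        rw [interior_Icc] at hs
        rw [(hder s hs.1.le).deriv]
        have hyis : 0 ≤ y s i := hnonneg s hs.1.le i
        have hAy : -C * y s i ≤ (A (ω s) *ᵥ y s) i := by
          have hmv : (A (ω s) *ᵥ y s) i = ∑ j : Fin d, A (ω s) i j * y s j := by
            simp [Matrix.mulVec, dotProduct]
          rw [hmv]
          have hsum_eq : A (ω s) i i * y s i
              + ∑ j ∈ Finset.univ.erase i, A (ω s) i j * y s j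
              = ∑ j : Fin d, A (ω s) i j * y s j :=
            Finset.add_sum_erase _ (fun j => A (ω s) i j * y s j) (Finset.mem_univ i)
          have hrest : 0 ≤ ∑ j ∈ Finset.univ.erase i, A (ω s) i j * y s j := by
            refine Finset.sum_nonneg fun j hj => ?_
            exact mul_nonneg (hMetz _ i j (Finset.ne_of_mem_erase hj).symm)
              (hnonneg s hs.1.le j)
          have hdiag : -C * y s i ≤ A (ω s) i i * y s i := by
            refine mul_le_mul_of_nonneg_right ?_ hyis
            have h1 := hC (ω s) i i
            have h2 := neg_abs_le (A (ω s) i i)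
            linarith
          linarith
        have hexp : 0 < Real.exp (C * s) := Real.exp_pos _
        nlinarith [mul_nonneg hexp.le
          (by linarith : 0 ≤ (A (ω s) *ᵥ y s) i + C * y s i)]
    have h0t : h 0 ≤ h t := hmono ⟨le_refl 0, ht⟩ ⟨ht, le_refl t⟩ ht
    have h0eq : h 0 = y 0 i := by simp [hh]
    rw [h0eq] at h0t
    have hht : h t = Real.exp (C * t) * y t i := rfl
    rw [hht] at h0t
    have hyt : 0 ≤ y t i := hnonneg t ht i
    have hexp : 0 < Real.exp (C * t) := Real.exp_pos _
    nlinarith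
  refine ⟨hnonneg t ht, ?_, hpos⟩
  obtain ⟨i, hi⟩ := Function.ne_iff.mp h0ne
  have hi' : 0 < y 0 i := by
    have : y 0 i ≠ 0 := by simpa using hi
    exact (h0nonneg i).lt_of_ne (Ne.symm this)
  intro hz
  have := hpos i hi'
  rw [hz] at this
  simp at this
end

section
/- Let Φ(t) be the solution of the matrix ODE M'(t) = A(ω_t) M(t), M(0) = Id, where each A(ω_t) is Metzler and t ↦ A(ω_t) is bounded by a constant r in operator norm. Then Φ(t) is a Metzler matrix with strictly positive diagonal entries for all t ≥ 0; more precisely e^{2rt} Φ(t) ≥ e^{rt} Id entrywise. -/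
/-!
Let `B` be Metzler with row sums at most `R`, and add the barrier `ε e^{(R+1)t}` to every
coordinate of a solution of `x' = B x` with `x(0) ≥ 0`. When one coordinate of the perturbed
solution touches `0` while the others are still `≥ 0`, the Metzler property makes its derivative at
least `ε e^{(R+1)t} > 0`, so it cannot cross `0`; letting `ε → 0` gives `x ≥ 0`. Once `Φ ≥ 0`, the derivative of `e^{rt} Φ` is `e^{rt} (A + r) Φ ≥ 0`, since `A + r` is
entrywise nonnegative. Hence `e^{rt} Φ(t) ≥ Φ(0) = 1`, and multiplying by `e^{rt}` gives the claim.
-/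

open Matrix

open Filter Topology Set

theorem HasDerivAt.eventually_pos_nhdsGT {f : ℝ → ℝ} {f' a : ℝ} (hf : HasDerivAt f f' a)
    (ha : f a = 0) (hf' : 0 < f') : ∀ᶠ x in 𝓝[>] a, 0 < f x := by
  have hslope := (hasDerivAt_iff_tendsto_slope.mp hf).eventually (eventually_gt_nhds hf')
  filter_upwards [nhdsGT_le_nhdsNE a hslope, self_mem_nhdsWithin] with x hx hax
  exact pos_of_slope_pos hax hx ha

namespace Matrix.IsMetzler

variable {d : ℕ} {M : Matrix (Fin d) (Fin d) ℝ}

theorem mulVec_apply_nonneg (hM : M.IsMetzler) {v : Fin d → ℝ} (hv : 0 ≤ v) {i : Fin d}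
    (hvi : v i = 0) : 0 ≤ (M *ᵥ v) i := by
  simp only [mulVec, dotProduct]
  refine Finset.sum_nonneg fun k _ => ?_
  rcases eq_or_ne i k with rfl | hik
  · simp [hvi]
  · exact mul_nonneg (hM i k hik) (hv k)

theorem add_smul_one_apply_nonneg (hM : M.IsMetzler) {r : ℝ} (hr : ∀ i, -r ≤ M i i)
    (i j : Fin d) : 0 ≤ (M + r • 1) i j := by
  rcases eq_or_ne i j with rfl | hij
  · simpa [neg_le_iff_add_nonneg] using hr i
  · simpa [one_apply_ne hij] using hM i j hij

theorem add_smul_mulVec_apply_nonneg (hM : M.IsMetzler) {r : ℝ} (hr : ∀ i, -r ≤ M i i)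
    {v : Fin d → ℝ} (hv : 0 ≤ v) (i : Fin d) : 0 ≤ (M *ᵥ v) i + r * v i := by
  have h : (M *ᵥ v) i + r * v i = ((M + r • 1) *ᵥ v) i := by simp [add_mulVec, smul_mulVec]
  rw [h]
  simp only [mulVec, dotProduct]
  exact Finset.sum_nonneg fun k _ => mul_nonneg (hM.add_smul_one_apply_nonneg hr i k) (hv k)

end Matrix.IsMetzler

section MetzlerSystem

variable {d : ℕ} {B : ℝ → Matrix (Fin d) (Fin d) ℝ} {x : ℝ → Fin d → ℝ}

theorem add_exp_nonneg_of_hasDerivAt_metzler {R : ℝ} (hB : ∀ t, (B t).IsMetzler)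
    (hR : ∀ t i, ∑ k, B t i k ≤ R)
    (hx : ∀ t i, HasDerivAt (fun u => x u i) ((B t *ᵥ x t) i) t) (hx0 : 0 ≤ x 0)
    {ε : ℝ} (hε : 0 < ε) {t : ℝ} (ht : 0 ≤ t) (i : Fin d) :
    0 ≤ x t i + ε * Real.exp ((R + 1) * t) := by
  set e : ℝ → ℝ := fun u => ε * Real.exp ((R + 1) * u)
  set y : ℝ → Fin d → ℝ := fun u k => x u k + e u
  have he : ∀ u, HasDerivAt e (e u * (R + 1)) u := fun u => by
    simpa [e, mul_assoc] using (((hasDerivAt_id u).const_mul (R + 1)).exp).const_mul ε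
  have hy : ∀ u k, HasDerivAt (fun v => y v k) ((B u *ᵥ x u) k + e u * (R + 1)) u :=
    fun u k => (hx u k).add (he u)
  have hy_cont : Continuous y := continuous_pi fun k =>
    continuous_iff_continuousAt.2 fun u => (hy u k).continuousAt
  have hstep : ∀ u, 0 ≤ y u → ∀ k, ∀ᶠ v in 𝓝[>] u, 0 < y v k := by
    intro u hu k
    rcases (hu k).eq_or_lt with hzero | hpos
    · refine (hy u k).eventually_pos_nhdsGT hzero.symm ?_
      have hBx : (B u *ᵥ x u) k = (B u *ᵥ y u) k - (∑ l, B u k l) * e u := by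
        simp [y, mulVec, dotProduct, mul_add, Finset.sum_add_distrib, Finset.sum_mul]
      have hBy := (hB u).mulVec_apply_nonneg hu hzero.symm
      have he_pos : 0 < e u := by positivity
      have hsum := mul_le_mul_of_nonneg_right (hR u k) he_pos.le
      rw [hBx]
      linarith
    · exact nhdsWithin_le_nhds
        (((continuous_apply k).comp hy_cont).continuousAt.eventually (lt_mem_nhds hpos))
  have hIcc : Icc 0 t ⊆ {u | 0 ≤ y u} := by
    refine IsClosed.Icc_subset_of_forall_mem_nhdsWithin
      ((isClosed_le continuous_const hy_cont).inter isClosed_Icc) ?_ ?_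
    · intro k
      simpa [y, e] using add_nonneg (hx0 k) hε.le
    · rintro u ⟨hu, -⟩
      filter_upwards [eventually_all.2 (hstep u hu)] with v hv k using (hv k).le
  exact hIcc ⟨ht, le_rfl⟩ i

theorem nonneg_of_hasDerivAt_metzler {R : ℝ} (hB : ∀ t, (B t).IsMetzler)
    (hR : ∀ t i, ∑ k, B t i k ≤ R)
    (hx : ∀ t i, HasDerivAt (fun u => x u i) ((B t *ᵥ x t) i) t) (hx0 : 0 ≤ x 0)
    {t : ℝ} (ht : 0 ≤ t) : 0 ≤ x t := fun i =>
  le_of_forall_pos_le_add fun δ hδ => by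
    have hexp := Real.exp_pos ((R + 1) * t)
    simpa [div_mul_cancel₀ δ hexp.ne'] using
      add_exp_nonneg_of_hasDerivAt_metzler hB hR hx hx0 (div_pos hδ hexp) ht i

theorem le_exp_mul_of_hasDerivAt_metzler {R r : ℝ} (hB : ∀ t, (B t).IsMetzler)
    (hR : ∀ t i, ∑ k, B t i k ≤ R) (hr : ∀ t i, -r ≤ B t i i)
    (hx : ∀ t i, HasDerivAt (fun u => x u i) ((B t *ᵥ x t) i) t) (hx0 : 0 ≤ x 0)
    {t : ℝ} (ht : 0 ≤ t) (i : Fin d) : x 0 i ≤ Real.exp (r * t) * x t i := by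
  have hderiv : ∀ u, HasDerivAt (fun v => Real.exp (r * v) * x v i)
      (Real.exp (r * u) * ((B u *ᵥ x u) i + r * x u i)) u := fun u =>
    ((((hasDerivAt_id' u).const_mul r).exp).mul (hx u i)).congr_deriv (by ring)
  have hmono : MonotoneOn (fun v => Real.exp (r * v) * x v i) (Ici 0) := by
    refine monotoneOn_of_hasDerivWithinAt_nonneg (convex_Ici 0)
      (fun u _ => (hderiv u).continuousAt.continuousWithinAt)
      (fun u _ => (hderiv u).hasDerivWithinAt) fun u hu => ?_
    rw [interior_Ici] at hu
    exact mul_nonneg (Real.exp_pos _).le <| (hB u).add_smul_mulVec_apply_nonneg (hr u)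
      (nonneg_of_hasDerivAt_metzler hB hR hx hx0 (le_of_lt hu)) i
  simpa using hmono self_mem_Ici ht ht

end MetzlerSystem

theorem fundamental_solution_metzler_positive_diagonal_general
    {d : ℕ} {S : Type*}
    (A : S → Matrix (Fin d) (Fin d) ℝ) (hMetz : ∀ s, (A s).IsMetzler)
    (ω : ℝ → S) (r : ℝ)
    (hbound : ∀ t i j, |A (ω t) i j| ≤ r)
    (Φ : ℝ → Matrix (Fin d) (Fin d) ℝ)
    (hΦ : ∀ t i j, HasDerivAt (fun u => Φ u i j) ((A (ω t) * Φ t) i j) t)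
    (hΦ0 : Φ 0 = 1) :
    ∀ t, 0 ≤ t →
      ((Φ t).IsMetzler ∧ ∀ i, 0 < Φ t i i) ∧
      ∀ i j, Real.exp (r * t) * (1 : Matrix (Fin d) (Fin d) ℝ) i j ≤
        Real.exp (2 * r * t) * Φ t i j := by
  intro t ht
  have hrow : ∀ u i, ∑ k, A (ω u) i k ≤ d * r := fun u i => by
    simpa using Finset.sum_le_sum fun k (_ : k ∈ Finset.univ) =>
      (le_abs_self _).trans (hbound u i k)
  have hdiag : ∀ u i, -r ≤ A (ω u) i i := fun u i =>
    (neg_le_neg (hbound u i i)).trans (neg_abs_le _)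
  have hΨ : ∀ i j, (1 : Matrix (Fin d) (Fin d) ℝ) i j ≤ Real.exp (r * t) * Φ t i j :=
    fun i j => by
      simpa [hΦ0] using le_exp_mul_of_hasDerivAt_metzler (x := fun u k => Φ u k j)
        (fun u => hMetz (ω u)) hrow hdiag (fun u k => hΦ u k j)
        (fun k => by simp [hΦ0, one_apply, apply_ite]) ht i
  have hexp := Real.exp_pos (r * t)
  refine ⟨⟨fun i j hij => ?_, fun i => ?_⟩, fun i j => ?_⟩
  · have := hΨ i j
    rw [one_apply_ne hij] at this
    exact nonneg_of_mul_nonneg_right this hexp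
  · have := hΨ i i
    rw [one_apply_eq] at this
    exact pos_of_mul_pos_right (one_pos.trans_le this) hexp.le
  · rw [show 2 * r * t = r * t + r * t by ring, Real.exp_add, mul_assoc]
    exact mul_le_mul_of_nonneg_left (hΨ i j) hexp.le

theorem fundamental_solution_metzler_positive_diagonal
    {d : ℕ} {S : Type*} [MetricSpace S]
    (A : S → Matrix (Fin d) (Fin d) ℝ) (hMetz : ∀ s, (A s).IsMetzler)
    (ω : ℝ → S) (r : ℝ)
    (hbound : ∀ t i j, |A (ω t) i j| ≤ r)
    (Φ : ℝ → Matrix (Fin d) (Fin d) ℝ)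
    (hΦ : ∀ t i j, HasDerivAt (fun u => Φ u i j) ((A (ω t) * Φ t) i j) t)
    (hΦ0 : Φ 0 = 1) :
    ∀ t, 0 ≤ t →
      ((Φ t).IsMetzler ∧ ∀ i, 0 < Φ t i i) ∧
      ∀ i j, Real.exp (r * t) * (1 : Matrix (Fin d) (Fin d) ℝ) i j ≤
        Real.exp (2 * r * t) * Φ t i j :=
  fundamental_solution_metzler_positive_diagonal_general A hMetz ω r hbound Φ hΦ hΦ0
end

section
/- For θ, θ' in the open simplex (all coordinates positive, summing to 1), the maximum coordinate distance satisfies max_{1≤i≤d} |θ_i − θ'_i| ≤ e^{d_H(θ,θ')} − 1, where d_H is the Hilbert projective metric. -/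
/-!
Let `m ≤ θ i / θ' i ≤ M` be the extreme coordinate ratios, so that `exp (d_H θ θ') = M / m`.
Both vectors sum to `1`, which forces `m ≤ 1 ≤ M`. Then `θ i - θ' i ≤ (M - 1) θ' i ≤ M - 1` and
`θ' i - θ i ≤ (1 - m) θ' i ≤ 1 - m`, and both bounds are at most `M / m - 1`, the second because
`1 - m ≤ 1 / m - 1` is `(1 - m) ^ 2 ≥ 0`.
-/

open Finset

/-- The Hilbert projective metric on the strictly positive orthant. -/
noncomputable def hilbertDist {d : ℕ} [NeZero d] (x y : Fin d → ℝ) : ℝ :=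
  Real.log ((Finset.univ.sup' Finset.univ_nonempty fun i => x i / y i) /
    (Finset.univ.inf' Finset.univ_nonempty fun i => x i / y i))

/-- The open (relative interior of the) unit simplex. -/
def openSimplex (d : ℕ) : Set (Fin d → ℝ) :=
  {θ | (∀ i, 0 < θ i) ∧ ∑ i, θ i = 1}

section RatioBounds

variable {ι : Type*} [Fintype ι] [Nonempty ι] {x y : ι → ℝ}

lemma le_sup'_div_mul {i : ι} (hy : 0 < y i) :
    x i ≤ (univ.sup' univ_nonempty fun j => x j / y j) * y i :=
  (div_le_iff₀ hy).1 (le_sup' (fun j => x j / y j) (mem_univ i))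

lemma inf'_div_mul_le {i : ι} (hy : 0 < y i) :
    (univ.inf' univ_nonempty fun j => x j / y j) * y i ≤ x i :=
  (le_div_iff₀ hy).1 (inf'_le (fun j => x j / y j) (mem_univ i))

lemma inf'_div_pos (hx : ∀ i, 0 < x i) (hy : ∀ i, 0 < y i) :
    0 < univ.inf' univ_nonempty fun j => x j / y j :=
  (lt_inf'_iff _).2 fun i _ => div_pos (hx i) (hy i)

lemma sup'_div_pos (hx : ∀ i, 0 < x i) (hy : ∀ i, 0 < y i) :
    0 < univ.sup' univ_nonempty fun j => x j / y j :=
  (lt_sup'_iff _).2 ⟨_, mem_univ (Classical.arbitrary ι), div_pos (hx _) (hy _)⟩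

lemma one_le_sup'_div (hy : ∀ i, 0 < y i) (hsum : ∑ i, x i = ∑ i, y i) :
    1 ≤ univ.sup' univ_nonempty fun j => x j / y j := by
  have hy_sum : 0 < ∑ i, y i := sum_pos (fun i _ => hy i) univ_nonempty
  have : ∑ i, y i ≤ (univ.sup' univ_nonempty fun j => x j / y j) * ∑ i, y i :=
    calc ∑ i, y i = ∑ i, x i := hsum.symm
      _ ≤ ∑ i, (univ.sup' univ_nonempty fun j => x j / y j) * y i :=
        sum_le_sum fun i _ => le_sup'_div_mul (hy i)
      _ = _ := (mul_sum _ _ _).symm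
  exact (le_mul_iff_one_le_left hy_sum).1 this

lemma inf'_div_le_one (hy : ∀ i, 0 < y i) (hsum : ∑ i, x i = ∑ i, y i) :
    (univ.inf' univ_nonempty fun j => x j / y j) ≤ 1 := by
  have hy_sum : 0 < ∑ i, y i := sum_pos (fun i _ => hy i) univ_nonempty
  have : (univ.inf' univ_nonempty fun j => x j / y j) * ∑ i, y i ≤ ∑ i, y i :=
    calc _ = ∑ i, (univ.inf' univ_nonempty fun j => x j / y j) * y i := mul_sum _ _ _
      _ ≤ ∑ i, x i := sum_le_sum fun i _ => inf'_div_mul_le (hy i)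
      _ = ∑ i, y i := hsum
  exact (mul_le_iff_le_one_left hy_sum).1 this

end RatioBounds

lemma exp_hilbertDist {d : ℕ} [NeZero d] {x y : Fin d → ℝ} (hx : ∀ i, 0 < x i)
    (hy : ∀ i, 0 < y i) :
    Real.exp (hilbertDist x y) = (univ.sup' univ_nonempty fun i => x i / y i) /
      (univ.inf' univ_nonempty fun i => x i / y i) :=
  Real.exp_log (div_pos (sup'_div_pos hx hy) (inf'_div_pos hx hy))

lemma abs_sub_le_div_sub_one {a b m M : ℝ} (hb1 : b ≤ 1) (hm : 0 < m)
    (hm1 : m ≤ 1) (hM1 : 1 ≤ M) (hlo : m * b ≤ a) (hhi : a ≤ M * b) :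
    |a - b| ≤ M / m - 1 := by
  have h_up : M - 1 ≤ M / m - 1 := by
    linarith [le_div_self (by linarith : 0 ≤ M) hm hm1]
  have h_down : 1 - m ≤ M / m - 1 := by
    have : 2 - m ≤ M / m := by
      rw [le_div_iff₀ hm]
      nlinarith [sq_nonneg (1 - m)]
    linarith
  rw [abs_le]
  constructor
  · nlinarith
  · nlinarith

theorem abs_sub_le_exp_hilbertDist_sub_one {d : ℕ} [NeZero d]
    {θ θ' : Fin d → ℝ} (hθ : θ ∈ openSimplex d) (hθ' : θ' ∈ openSimplex d) :
    ∀ i, |θ i - θ' i| ≤ Real.exp (hilbertDist θ θ') - 1 := by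
  obtain ⟨hpos, hsum⟩ := hθ
  obtain ⟨hpos', hsum'⟩ := hθ'
  have hsum_eq : ∑ i, θ i = ∑ i, θ' i := hsum.trans hsum'.symm
  intro i
  have hθ'_le_one : θ' i ≤ 1 :=
    hsum' ▸ single_le_sum (fun j _ => (hpos' j).le) (mem_univ i)
  rw [exp_hilbertDist hpos hpos']
  exact abs_sub_le_div_sub_one hθ'_le_one (inf'_div_pos hpos hpos')
    (inf'_div_le_one hpos' hsum_eq) (one_le_sup'_div hpos' hsum_eq)
    (inf'_div_mul_le (hpos' i)) (le_sup'_div_mul (hpos' i))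
end

section
/- (Birkhoff contraction) For a d×d matrix M with all entries strictly positive, and for all x, y in the strictly positive orthant with d_H(x,y) > 0, one has d_H(Mx, My) ≤ τ(M) · d_H(x,y), where τ(M) = (1 − √r(M)) / (1 + √r(M)) with r(M) = min_{i,j,k,l} M_{ik} M_{jl} / (M_{jk} M_{il}); in particular τ(M) < 1. -/
open Finset Matrix

/-- Birkhoff's cross-ratio quantity `r(M) = min_{i,j,k,l} M_{ik} M_{jl} / (M_{jk} M_{il})`. -/
noncomputable def birkhoffR {d : ℕ} [NeZero d] (M : Matrix (Fin d) (Fin d) ℝ) : ℝ :=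
  Finset.univ.inf' Finset.univ_nonempty
    fun p : (Fin d × Fin d) × Fin d × Fin d =>
      M p.1.1 p.2.1 * M p.1.2 p.2.2 / (M p.1.2 p.2.1 * M p.1.1 p.2.2)

/-- The Birkhoff contraction coefficient `τ(M) = (1 − √r(M)) / (1 + √r(M))`. -/
noncomputable def birkhoffTau {d : ℕ} [NeZero d] (M : Matrix (Fin d) (Fin d) ℝ) : ℝ :=
  (1 - Real.sqrt (birkhoffR M)) / (1 + Real.sqrt (birkhoffR M))


lemma stepA (A A' B B' T s : ℝ) (hA : 0 ≤ A) (hA' : 0 ≤ A') (hB : 0 ≤ B) (hB' : 0 ≤ B')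
    (hT : 1 ≤ T) (hs0 : 0 ≤ s) (hs1 : s ≤ 1) (h1 : s ^ 2 * (A * B') ≤ A' * B) :
    (1 + s * T) ^ 2 * ((A * T ^ 2 + A') * (B + B')) ≤
      (T + s) ^ 2 * ((A + A') * (B * T ^ 2 + B')) := by
  have hT0 : (0:ℝ) < T := lt_of_lt_of_le one_pos hT
  set g1 := Real.sqrt (A * B) with hg1d
  set g2 := Real.sqrt (A' * B') with hg2d
  have hg1 : g1 ^ 2 = A * B := Real.sq_sqrt (mul_nonneg hA hB)
  have hg2 : g2 ^ 2 = A' * B' := Real.sq_sqrt (mul_nonneg hA' hB')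
  have hg10 : 0 ≤ g1 := Real.sqrt_nonneg _
  have hg20 : 0 ≤ g2 := Real.sqrt_nonneg _
  have hgg : s * (A * B') ≤ g1 * g2 := by
    have h2 : (s * (A * B')) ^ 2 ≤ (g1 * g2) ^ 2 := by
      have e : (g1 * g2) ^ 2 = (A * B') * (A' * B) := by rw [mul_pow, hg1, hg2]; ring
      rw [e]
      calc (s * (A * B')) ^ 2 = (s ^ 2 * (A * B')) * (A * B') := by ring
        _ ≤ (A' * B) * (A * B') := mul_le_mul_of_nonneg_right h1 (mul_nonneg hA hB')
        _ = (A * B') * (A' * B) := by ring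
    nlinarith [mul_nonneg hg10 hg20, mul_nonneg hs0 (mul_nonneg hA hB')]
  have e3 : 2 * T * (g1 * g2) ≤ A * B * T ^ 2 + A' * B' := by
    nlinarith [sq_nonneg (g1 * T - g2), hg1, hg2]
  have hT21 : (0:ℝ) ≤ T ^ 2 - 1 := by nlinarith
  have hs21 : (0:ℝ) ≤ 1 - s ^ 2 := by nlinarith
  have p1 : 0 ≤ ((T ^ 2 - 1) * ((1 - s ^ 2) * (2 * T))) * (g1 * g2 - s * (A * B')) :=
    mul_nonneg (mul_nonneg hT21 (mul_nonneg hs21 (by linarith))) (by linarith)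
  have p2 : 0 ≤ ((T ^ 2 - 1) * (T ^ 2 + 1 + 2 * s * T)) * (A' * B - s ^ 2 * (A * B')) :=
    mul_nonneg (mul_nonneg hT21 (by nlinarith)) (by linarith)
  have p3 : 0 ≤ ((T ^ 2 - 1) * (1 - s ^ 2)) * (A * B * T ^ 2 + A' * B' - 2 * T * (g1 * g2)) :=
    mul_nonneg (mul_nonneg hT21 hs21) (by linarith)
  nlinarith [p1, p2, p3]


lemma stepB (s T : ℝ) (hs0 : 0 ≤ s) (hs1 : s ≤ 1) (hT : 1 ≤ T) :
    (T + s) / (1 + s * T) ≤ T ^ ((1 - s) / (1 + s)) := by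
  have hT0 : (0:ℝ) < T := by linarith
  have hs1' : (0:ℝ) < 1 + s := by linarith
  set τ : ℝ := (1 - s) / (1 + s) with hτd
  set f : ℝ → ℝ := fun X => τ * Real.log X - Real.log (X + s) + Real.log (1 + s * X) with hfd
  have hder : ∀ X : ℝ, 1 ≤ X →
      HasDerivAt f (τ * X⁻¹ - 1 / (X + s) + s / (1 + s * X)) X := by
    intro X hX
    have hX0 : X ≠ 0 := by intro h; rw [h] at hX; linarith
    have hXs : X + s ≠ 0 := by nlinarith
    have hsX : 1 + s * X ≠ 0 := by nlinarith [mul_nonneg hs0 (by linarith : (0:ℝ) ≤ X)]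
    have d1 : HasDerivAt (fun X : ℝ => τ * Real.log X) (τ * X⁻¹) X :=
      (Real.hasDerivAt_log hX0).const_mul τ
    have d2 : HasDerivAt (fun X : ℝ => Real.log (X + s)) (1 / (X + s)) X :=
      ((hasDerivAt_id X).add_const s).log hXs
    have d3 : HasDerivAt (fun X : ℝ => Real.log (1 + s * X)) (s / (1 + s * X)) X := by
      have h : HasDerivAt (fun X : ℝ => 1 + s * X) s X := by
        simpa using ((hasDerivAt_id X).const_mul s).const_add 1
      exact h.log hsX
    exact (d1.sub d2).add d3
  have hmono : MonotoneOn f (Set.Ici 1) := by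
    apply monotoneOn_of_deriv_nonneg (convex_Ici 1)
    · intro X hX
      replace hX : 1 ≤ X := hX
      exact (hder X hX).continuousAt.continuousWithinAt
    · intro X hX
      rw [interior_Ici] at hX
      replace hX : 1 < X := hX
      exact (hder X (le_of_lt hX)).differentiableAt.differentiableWithinAt
    · intro X hX
      rw [interior_Ici] at hX
      replace hX : 1 < X := hX
      rw [(hder X (le_of_lt hX)).deriv]
      have hX0 : (0:ℝ) < X := by linarith
      have hXs : (0:ℝ) < X + s := by linarith
      have hsX : (0:ℝ) < 1 + s * X := by nlinarith [mul_nonneg hs0 (by linarith : (0:ℝ) ≤ X)]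
      have key : τ * X⁻¹ - 1 / (X + s) + s / (1 + s * X) =
          (s * (1 - s) * (X - 1) ^ 2) / ((1 + s) * (X * ((X + s) * (1 + s * X)))) := by
        rw [hτd]; field_simp; ring
      rw [key]
      apply div_nonneg
      · exact mul_nonneg (mul_nonneg hs0 (by linarith)) (sq_nonneg _)
      · have hX0 : (0:ℝ) < X := by linarith
        have hXs : (0:ℝ) < X + s := by linarith
        have hsX : (0:ℝ) < 1 + s * X := by nlinarith [mul_nonneg hs0 (by linarith : (0:ℝ) ≤ X)]
        positivity
  have h0 : f 1 ≤ f T := hmono (Set.mem_Ici.2 le_rfl) (Set.mem_Ici.2 hT) hT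
  have hf1 : f 1 = 0 := by simp [hfd]
  rw [hf1] at h0
  have hTs : (0:ℝ) < T + s := by linarith
  have hsT : (0:ℝ) < 1 + s * T := by nlinarith [mul_nonneg hs0 (by linarith : (0:ℝ) ≤ T)]
  have e : (T + s) / (1 + s * T) = Real.exp (Real.log (T + s) - Real.log (1 + s * T)) := by
    rw [Real.exp_sub, Real.exp_log hTs, Real.exp_log hsT]
  rw [e, Real.rpow_def_of_pos hT0]
  apply Real.exp_le_exp.2
  simp only [hfd] at h0
  linarith [h0]




lemma keyPair {d : ℕ} [NeZero d] (u v z : Fin d → ℝ) (hu : ∀ k, 0 < u k) (hv : ∀ k, 0 < v k)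
    (α β T s : ℝ) (hβ : 0 < β) (hzl : ∀ k, β ≤ z k) (hzu : ∀ k, z k ≤ α)
    (hα : α = T ^ 2 * β) (hT : 1 ≤ T) (hs0 : 0 ≤ s) (hs1 : s ≤ 1)
    (hr : ∀ k l, s ^ 2 * (u k * v l) ≤ u l * v k) :
    (∑ k, u k * z k) * (∑ k, v k) ≤
      ((T + s) / (1 + s * T)) ^ 2 * ((∑ k, u k) * (∑ k, v k * z k)) := by
  have hsT : (0:ℝ) < 1 + s * T := by nlinarith [mul_nonneg hs0 (by linarith : (0:ℝ) ≤ T)]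
  set C : ℝ := ((T + s) / (1 + s * T)) ^ 2 with hCd
  have hCeq : C * (1 + s * T) ^ 2 = (T + s) ^ 2 := by
    rw [hCd, div_pow, div_mul_cancel₀ _ (pow_ne_zero 2 hsT.ne')]
  set Su : ℝ := ∑ k, u k with hSud
  set Sv : ℝ := ∑ k, v k with hSvd
  set c : Fin d → ℝ := fun k => C * Su * v k - u k * Sv with hcd
  set w : Fin d → ℝ := fun k => if c k < 0 then α else β with hwd
  have hwz : ∀ k, w k * c k ≤ z k * c k := by
    intro k
    by_cases h : c k < 0
    · simp only [hwd, if_pos h]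
      exact mul_le_mul_of_nonpos_right (hzu k) h.le
    · simp only [hwd, if_neg h]
      exact mul_le_mul_of_nonneg_right (hzl k) (not_lt.1 h)
  have hsum : ∑ k, w k * c k ≤ ∑ k, z k * c k := Finset.sum_le_sum fun k _ => hwz k
  have ezc : ∑ k, z k * c k = C * Su * (∑ k, v k * z k) - (∑ k, u k * z k) * Sv := by
    simp only [hcd]
    rw [Finset.sum_congr rfl
      (fun k _ => by ring :
        ∀ k ∈ Finset.univ, z k * (C * Su * v k - u k * Sv)
          = C * Su * (v k * z k) - (u k * z k) * Sv),
      Finset.sum_sub_distrib, ← Finset.mul_sum, ← Finset.sum_mul]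
  set S : Finset (Fin d) := Finset.univ.filter (fun k => c k < 0) with hSd
  set Sc : Finset (Fin d) := Finset.univ.filter (fun k => ¬ c k < 0) with hScd
  set A : ℝ := ∑ k ∈ S, u k with hAd
  set A' : ℝ := ∑ k ∈ Sc, u k with hA'd
  set B : ℝ := ∑ k ∈ S, v k with hBd
  set B' : ℝ := ∑ k ∈ Sc, v k with hB'd
  have hSu' : Su = A + A' := by
    rw [hSud, hAd, hA'd, hSd, hScd, Finset.sum_filter_add_sum_filter_not]
  have hSv' : Sv = B + B' := by
    rw [hSvd, hBd, hB'd, hSd, hScd, Finset.sum_filter_add_sum_filter_not]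
  have euw : ∑ k, u k * w k = A * α + A' * β := by
    rw [← Finset.sum_filter_add_sum_filter_not Finset.univ (fun k => c k < 0) (fun k => u k * w k)]
    rw [hAd, hA'd, Finset.sum_mul, Finset.sum_mul]
    congr 1
    · exact Finset.sum_congr rfl fun k hk => by
        simp only [hwd, if_pos (Finset.mem_filter.1 hk).2]
    · exact Finset.sum_congr rfl fun k hk => by
        simp only [hwd, if_neg (Finset.mem_filter.1 hk).2]
  have evw : ∑ k, v k * w k = B * α + B' * β := by
    rw [← Finset.sum_filter_add_sum_filter_not Finset.univ (fun k => c k < 0) (fun k => v k * w k)]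
    rw [hBd, hB'd, Finset.sum_mul, Finset.sum_mul]
    congr 1
    · exact Finset.sum_congr rfl fun k hk => by
        simp only [hwd, if_pos (Finset.mem_filter.1 hk).2]
    · exact Finset.sum_congr rfl fun k hk => by
        simp only [hwd, if_neg (Finset.mem_filter.1 hk).2]
  have ewc : ∑ k, w k * c k = C * Su * (B * α + B' * β) - (A * α + A' * β) * Sv := by
    simp only [hcd]
    rw [← evw, ← euw]
    rw [Finset.sum_congr rfl
      (fun k _ => by ring :
        ∀ k ∈ Finset.univ, w k * (C * Su * v k - u k * Sv)
          = C * Su * (v k * w k) - (u k * w k) * Sv),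
      Finset.sum_sub_distrib, ← Finset.mul_sum, ← Finset.sum_mul]
  have hAnn : 0 ≤ A := Finset.sum_nonneg fun k _ => (hu k).le
  have hA'nn : 0 ≤ A' := Finset.sum_nonneg fun k _ => (hu k).le
  have hBnn : 0 ≤ B := Finset.sum_nonneg fun k _ => (hv k).le
  have hB'nn : 0 ≤ B' := Finset.sum_nonneg fun k _ => (hv k).le
  have h1 : s ^ 2 * (A * B') ≤ A' * B := by
    have e1 : s ^ 2 * (A * B') = ∑ k ∈ S, ∑ l ∈ Sc, s ^ 2 * (u k * v l) := by
      rw [hAd, hB'd, Finset.sum_mul_sum, Finset.mul_sum]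
      exact Finset.sum_congr rfl fun k _ => by rw [Finset.mul_sum]
    have e2 : A' * B = ∑ k ∈ S, ∑ l ∈ Sc, u l * v k := by
      rw [hA'd, hBd, Finset.sum_mul_sum, Finset.sum_comm]
    rw [e1, e2]
    exact Finset.sum_le_sum fun k _ => Finset.sum_le_sum fun l _ => hr k l
  have hmain := stepA A A' B B' T s hAnn hA'nn hBnn hB'nn hT hs0 hs1 h1
  have h0 : (A * α + A' * β) * (B + B') ≤ C * ((A + A') * (B * α + B' * β)) := by
    rw [hα]
    calc (A * (T ^ 2 * β) + A' * β) * (B + B')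
        = β * ((A * T ^ 2 + A') * (B + B')) := by ring
      _ ≤ C * (β * ((A + A') * (B * T ^ 2 + B'))) := by
          rw [← mul_le_mul_iff_of_pos_right (pow_pos hsT 2)]
          calc β * ((A * T ^ 2 + A') * (B + B')) * (1 + s * T) ^ 2
              = β * ((1 + s * T) ^ 2 * ((A * T ^ 2 + A') * (B + B'))) := by ring
            _ ≤ β * ((T + s) ^ 2 * ((A + A') * (B * T ^ 2 + B'))) :=
                mul_le_mul_of_nonneg_left hmain hβ.le
            _ = C * (β * ((A + A') * (B * T ^ 2 + B'))) * (1 + s * T) ^ 2 := by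
                rw [← hCeq]; ring
      _ = C * ((A + A') * (B * (T ^ 2 * β) + B' * β)) := by ring
  have hwc0 : 0 ≤ ∑ k, w k * c k := by
    rw [ewc, hSu', hSv']
    nlinarith [h0]
  rw [ezc] at hsum
  calc (∑ k, u k * z k) * (∑ k, v k) = (∑ k, u k * z k) * Sv := by rw [hSvd]
    _ ≤ C * Su * (∑ k, v k * z k) := by linarith
    _ = C * ((∑ k, u k) * (∑ k, v k * z k)) := by rw [hSud]; ring

theorem birkhoff_contraction {d : ℕ} [NeZero d]
    (M : Matrix (Fin d) (Fin d) ℝ) (hM : ∀ i j, 0 < M i j)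
    (x y : Fin d → ℝ) (hx : ∀ i, 0 < x i) (hy : ∀ i, 0 < y i)
    (hxy : 0 < hilbertDist x y) :
    hilbertDist (M *ᵥ x) (M *ᵥ y) ≤ birkhoffTau M * hilbertDist x y ∧
    birkhoffTau M < 1 := by
  set r : ℝ := birkhoffR M with hrd
  have hr0 : 0 < r := by
    obtain ⟨p, -, hp⟩ := Finset.exists_mem_eq_inf' (Finset.univ_nonempty)
      (fun p : (Fin d × Fin d) × Fin d × Fin d =>
        M p.1.1 p.2.1 * M p.1.2 p.2.2 / (M p.1.2 p.2.1 * M p.1.1 p.2.2))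
    rw [hrd, birkhoffR, hp]
    exact div_pos (mul_pos (hM _ _) (hM _ _)) (mul_pos (hM _ _) (hM _ _))
  have i1 : Fin d := ⟨0, Nat.pos_of_ne_zero (NeZero.ne d)⟩
  have hr1 : r ≤ 1 := by
    have h := Finset.inf'_le (b := ((i1, i1), (i1, i1)))
      (f := fun p : (Fin d × Fin d) × Fin d × Fin d =>
        M p.1.1 p.2.1 * M p.1.2 p.2.2 / (M p.1.2 p.2.1 * M p.1.1 p.2.2))
      (Finset.mem_univ _)
    rw [hrd, birkhoffR]
    refine le_trans h ?_
    rw [div_self (mul_pos (hM i1 i1) (hM i1 i1)).ne']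
  have hrle : ∀ i j k l : Fin d, r * (M j k * M i l) ≤ M j l * M i k := by
    intro i j k l
    have h : r ≤ M j l * M i k / (M i l * M j k) :=
      Finset.inf'_le (b := ((j, i), (l, k)))
        (f := fun p : (Fin d × Fin d) × Fin d × Fin d =>
          M p.1.1 p.2.1 * M p.1.2 p.2.2 / (M p.1.2 p.2.1 * M p.1.1 p.2.2))
        (Finset.mem_univ _)
    rw [le_div_iff₀ (mul_pos (hM i l) (hM j k))] at h
    nlinarith [h]
  set s : ℝ := Real.sqrt r with hsd
  have hs2 : s ^ 2 = r := Real.sq_sqrt hr0.le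
  have hs0 : 0 < s := Real.sqrt_pos.2 hr0
  have hs1 : s ≤ 1 := by
    rw [hsd, show (1:ℝ) = Real.sqrt 1 by rw [Real.sqrt_one]]
    exact Real.sqrt_le_sqrt hr1
  have hτeq : birkhoffTau M = (1 - s) / (1 + s) := rfl
  have hτlt : birkhoffTau M < 1 := by
    rw [hτeq, div_lt_one (by linarith)]
    linarith
  refine ⟨?_, hτlt⟩
  set z : Fin d → ℝ := fun k => x k / y k with hzd
  set α : ℝ := Finset.univ.sup' Finset.univ_nonempty z with hαd
  set β : ℝ := Finset.univ.inf' Finset.univ_nonempty z with hβd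
  have hzpos : ∀ k, 0 < z k := fun k => div_pos (hx k) (hy k)
  have hβ0 : 0 < β := by
    obtain ⟨k0, -, hk0⟩ := Finset.exists_mem_eq_inf' (Finset.univ_nonempty) z
    rw [hβd, hk0]; exact hzpos k0
  have hβz : ∀ k, β ≤ z k := fun k => Finset.inf'_le _ (Finset.mem_univ k)
  have hzα : ∀ k, z k ≤ α := fun k => Finset.le_sup' _ (Finset.mem_univ k)
  have hβα : β ≤ α := le_trans (hβz i1) (hzα i1)
  set t : ℝ := α / β with htd
  have ht1 : 1 ≤ t := (one_le_div hβ0).2 hβα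
  have ht0 : 0 < t := lt_of_lt_of_le one_pos ht1
  set T : ℝ := Real.sqrt t with hTd
  have hT2 : T ^ 2 = t := Real.sq_sqrt ht0.le
  have hT1 : 1 ≤ T := by
    rw [hTd, show (1:ℝ) = Real.sqrt 1 by rw [Real.sqrt_one]]
    exact Real.sqrt_le_sqrt ht1
  have hT0 : 0 < T := lt_of_lt_of_le one_pos hT1
  have hαt : α = T ^ 2 * β := by rw [hT2, htd, div_mul_cancel₀ _ hβ0.ne']
  have hD : hilbertDist x y = Real.log t := rfl
  have hτ0 : 0 ≤ birkhoffTau M := by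
    rw [hτeq]
    exact div_nonneg (by linarith) (by linarith)
  have hsT : (0:ℝ) < 1 + s * T := by nlinarith
  have hCt : ((T + s) / (1 + s * T)) ^ 2 ≤ t ^ birkhoffTau M := by
    have h1 := stepB s T hs0.le hs1 hT1
    have h2 : ((T + s) / (1 + s * T)) ^ 2 ≤ (T ^ ((1 - s) / (1 + s))) ^ 2 :=
      pow_le_pow_left₀ (by positivity) h1 2
    refine le_trans h2 (le_of_eq ?_)
    rw [hτeq, ← hT2, pow_two, pow_two, Real.mul_rpow hT0.le hT0.le]
  have hMx : ∀ i, 0 < (M *ᵥ x) i := fun i =>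
    Finset.sum_pos (fun k _ => mul_pos (hM i k) (hx k)) Finset.univ_nonempty
  have hMy : ∀ i, 0 < (M *ᵥ y) i := fun i =>
    Finset.sum_pos (fun k _ => mul_pos (hM i k) (hy k)) Finset.univ_nonempty
  have KEY : ∀ i j : Fin d,
      (M *ᵥ x) i * (M *ᵥ y) j ≤ t ^ birkhoffTau M * ((M *ᵥ y) i * (M *ᵥ x) j) := by
    intro i j
    set u : Fin d → ℝ := fun k => M i k * y k with hud
    set v : Fin d → ℝ := fun k => M j k * y k with hvd
    have hu : ∀ k, 0 < u k := fun k => mul_pos (hM i k) (hy k)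
    have hv : ∀ k, 0 < v k := fun k => mul_pos (hM j k) (hy k)
    have hr' : ∀ k l, s ^ 2 * (u k * v l) ≤ u l * v k := by
      intro k l
      simp only [hs2, hud, hvd]
      have h := mul_le_mul_of_nonneg_right (hrle j i k l)
        (mul_nonneg (hy k).le (hy l).le)
      nlinarith [h]
    have hkp := keyPair u v z hu hv α β T s hβ0 hβz hzα hαt hT1 hs0.le hs1 hr'
    have exi : (M *ᵥ x) i = ∑ k, u k * z k := by
      simp only [Matrix.mulVec, dotProduct, hud, hzd]
      refine Finset.sum_congr rfl fun k _ => ?_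
      rw [mul_assoc, mul_div_cancel₀ _ (hy k).ne']
    have exj : (M *ᵥ x) j = ∑ k, v k * z k := by
      simp only [Matrix.mulVec, dotProduct, hvd, hzd]
      refine Finset.sum_congr rfl fun k _ => ?_
      rw [mul_assoc, mul_div_cancel₀ _ (hy k).ne']
    have eyi : (M *ᵥ y) i = ∑ k, u k := rfl
    have eyj : (M *ᵥ y) j = ∑ k, v k := rfl
    rw [exi, eyi, exj, eyj]
    refine le_trans hkp ?_
    exact mul_le_mul_of_nonneg_right hCt
      (mul_nonneg (Finset.sum_nonneg fun k _ => (hu k).le)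
        (Finset.sum_nonneg fun k _ => (mul_nonneg (hv k).le ((hzpos k).le))))
  set g : Fin d → ℝ := fun i => (M *ᵥ x) i / (M *ᵥ y) i with hgd
  obtain ⟨i0, -, hi0⟩ := Finset.exists_mem_eq_sup' (Finset.univ_nonempty) g
  obtain ⟨j0, -, hj0⟩ := Finset.exists_mem_eq_inf' (Finset.univ_nonempty) g
  have hgpos : ∀ i, 0 < g i := fun i => div_pos (hMx i) (hMy i)
  have hquot : g i0 / g j0 ≤ t ^ birkhoffTau M := by
    have e : g i0 / g j0 =
        ((M *ᵥ x) i0 * (M *ᵥ y) j0) / ((M *ᵥ y) i0 * (M *ᵥ x) j0) := by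
      simp only [hgd]
      field_simp
    rw [e, div_le_iff₀ (mul_pos (hMy i0) (hMx j0))]
    calc (M *ᵥ x) i0 * (M *ᵥ y) j0 ≤ t ^ birkhoffTau M * ((M *ᵥ y) i0 * (M *ᵥ x) j0) :=
          KEY i0 j0
      _ = t ^ birkhoffTau M * ((M *ᵥ y) i0 * (M *ᵥ x) j0) := rfl
  have hfinal : hilbertDist (M *ᵥ x) (M *ᵥ y) = Real.log (g i0 / g j0) := by
    have e : hilbertDist (M *ᵥ x) (M *ᵥ y) =
        Real.log ((Finset.univ.sup' Finset.univ_nonempty g) /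
          (Finset.univ.inf' Finset.univ_nonempty g)) := rfl
    rw [e, hi0, hj0]
  rw [hfinal, hD]
  calc Real.log (g i0 / g j0) ≤ Real.log (t ^ birkhoffTau M) :=
        Real.log_le_log (div_pos (hgpos i0) (hgpos j0)) hquot
    _ = birkhoffTau M * Real.log t := Real.log_rpow ht0 _
end
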